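/- arXiv:2407.17690 — 9 statements merged into one kernel-verified Lean document; each statement's English description precedes it below -/
import Mathlib

section
/- Let X be a topological space and let {X_i | i ∈ I} be a stratification of X, i.e. a decomposition (a family of nonempty pairwise disjoint subsets covering X, equivalently given by the surjective decomposition map π : X → I with π(x) = i iff x ∈ X_i) that is locally finite (every point of X has an open neighborhood meeting X_i for only finitely many i), has locally closed strata, and satisfies the frontier condition (X_i ∩ closure(X_j) ≠ ∅ implies X_i ⊆ closure(X_j)). Then: (1) the relation i ≤ j ⟺ X_i ⊆ closure(X_j) is a partial order on I, and (2) the decomposition map π : X → I is continuous when I is equipped with the Alexandrov (upper-set) topology of this partial order; moreover this Alexandrov topology coincides with the quotient topology coinduced by π. -/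
open Set Topology TopologicalSpace

/-- The Alexandrov (upper-set) topology associated to a relation `r` on `I`:
a set is open iff it is upward-closed with respect to `r`. -/
def alexandrovTopOfRel {I : Type*} (r : I → I → Prop) : TopologicalSpace I where
  IsOpen U := ∀ ⦃i j : I⦄, r i j → i ∈ U → j ∈ U
  isOpen_univ := fun _ _ _ _ => trivial
  isOpen_inter := fun _ _ hU hV _ _ hij hi => ⟨hU hij hi.1, hV hij hi.2⟩
  isOpen_sUnion := fun S hS i j hij hi => by
    obtain ⟨U, hU, hiU⟩ := hi
    exact ⟨U, hU, hS U hU hij hiU⟩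

/-- A topology is Alexandrov if arbitrary intersections of open sets are open. -/
def IsAlexandrovTopology {I : Type*} (t : TopologicalSpace I) : Prop :=
  ∀ S : Set (Set I), (∀ U ∈ S, t.IsOpen U) → t.IsOpen (⋂₀ S)

/-- A stratification (locally finite decomposition with locally closed
strata satisfying the frontier condition) yields a partial order `i ≤ j ↔ Xᵢ ⊆ cl Xⱼ`
on the set of strata, the decomposition map is continuous for its Alexandrov topology,
and that Alexandrov topology coincides with the quotient topology. -/
theorem statement0 {X I : Type*} [tX : TopologicalSpace X] (π : X → I)
    (hsurj : Function.Surjective π)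
    (hlf : ∀ x : X, ∃ U : Set X, IsOpen U ∧ x ∈ U ∧
      {i : I | (U ∩ π ⁻¹' {i}).Nonempty}.Finite)
    (hlc : ∀ i : I, IsLocallyClosed (π ⁻¹' {i}))
    (hfr : ∀ i j : I, (π ⁻¹' {i} ∩ closure (π ⁻¹' {j})).Nonempty →
      π ⁻¹' {i} ⊆ closure (π ⁻¹' {j})) :
    IsPartialOrder I (fun i j => π ⁻¹' {i} ⊆ closure (π ⁻¹' {j})) ∧
    Continuous[tX, alexandrovTopOfRel (fun i j => π ⁻¹' {i} ⊆ closure (π ⁻¹' {j}))] π ∧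
    alexandrovTopOfRel (fun i j => π ⁻¹' {i} ⊆ closure (π ⁻¹' {j})) =
      TopologicalSpace.coinduced π tX := by
  set r : I → I → Prop := fun i j => π ⁻¹' {i} ⊆ closure (π ⁻¹' {j}) with hrdef
  -- antisymmetry
  have hanti : ∀ i j, r i j → r j i → i = j := by
    intro i j hij hji
    by_contra hne
    obtain ⟨x, hx⟩ := hsurj i
    have hxi : x ∈ π ⁻¹' {i} := hx
    obtain ⟨A, Z, hA, hZ, hAZ⟩ := hlc i
    have hxA : x ∈ A := (hAZ ▸ hxi).1
    have hxcl : x ∈ closure (π ⁻¹' {j}) := hij hxi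
    obtain ⟨y, hyA, hyj⟩ := mem_closure_iff.mp hxcl A hA hxA
    have hyZ : y ∈ Z := closure_minimal (fun z hz => (hAZ ▸ hz).2) hZ (hji hyj)
    have hyi : y ∈ π ⁻¹' {i} := hAZ ▸ ⟨hyA, hyZ⟩
    exact hne (hyi.symm.trans hyj)
  -- key: preimages of upper sets are open
  have key : ∀ U : Set I, (∀ ⦃i j : I⦄, r i j → i ∈ U → j ∈ U) → IsOpen (π ⁻¹' U) := by
    intro U hU
    rw [isOpen_iff_forall_mem_open]
    intro x hx
    obtain ⟨V, hVopen, hxV, hF⟩ := hlf x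
    set F : Set I := {i : I | (V ∩ π ⁻¹' {i}).Nonempty} with hFdef
    set C : Set X := ⋃ j ∈ F \ U, closure (π ⁻¹' {j}) with hCdef
    have hCclosed : IsClosed C :=
      (hF.subset (diff_subset)).isClosed_biUnion fun _ _ => isClosed_closure
    refine ⟨V \ C, ?_, hVopen.sdiff hCclosed, ⟨hxV, ?_⟩⟩
    · intro y hy
      have hyF : π y ∈ F := ⟨y, hy.1, rfl⟩
      by_contra hyU
      refine hy.2 ?_
      rw [hCdef]
      exact mem_iUnion₂.mpr ⟨π y, ⟨hyF, hyU⟩,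
        subset_closure (rfl : y ∈ π ⁻¹' {π y})⟩
    · intro hxC
      rw [hCdef] at hxC
      obtain ⟨j, hjFU, hxj⟩ := mem_iUnion₂.mp hxC
      have : r (π x) j := hfr (π x) j ⟨x, rfl, hxj⟩
      exact hjFU.2 (hU this hx)
  -- conversely: coinduced-open sets are upper
  have key2 : ∀ U : Set I, IsOpen (π ⁻¹' U) → ∀ ⦃i j : I⦄, r i j → i ∈ U → j ∈ U := by
    intro U hUopen i j hij hi
    obtain ⟨x, hx⟩ := hsurj i
    have hxU : x ∈ π ⁻¹' U := by simp [hx, hi]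
    have hxcl : x ∈ closure (π ⁻¹' {j}) := hij hx
    obtain ⟨y, hyU, hyj⟩ := mem_closure_iff.mp hxcl _ hUopen hxU
    exact hyj ▸ hyU
  refine ⟨?_, ?_, ?_⟩
  · exact { refl := fun i => subset_closure
            trans := fun i j k hij hjk =>
              hij.trans (closure_minimal hjk isClosed_closure)
            antisymm := hanti }
  · exact continuous_def.mpr fun U hU => key U hU
  · refine TopologicalSpace.ext_iff.mpr fun U => ?_
    rw [isOpen_coinduced]
    exact ⟨fun h => key U h, fun h => key2 U h⟩
end

section
/- Let (I, ≼) be a partially ordered set, let I_≼ denote I with the Alexandrov (upper-set) topology, and let π : X → I_≼ be a continuous surjection from a topological space X. If the space I_≼ is locally finite (every point has a finite open neighborhood) and π is an open map, then the decomposition of X by the fibers of π is a stratification: it is locally finite, each fiber π⁻¹(i) is locally closed in X, and the frontier condition holds (π⁻¹(i) ∩ closure(π⁻¹(j)) ≠ ∅ implies π⁻¹(i) ⊆ closure(π⁻¹(j))). -/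
open Set Topology TopologicalSpace

/-- If `π : X → I_≼` is a poset-stratified space (continuous surjection to
a poset with its Alexandrov topology) such that `I_≼` is a locally finite space and `π` is
an open map, then the fibers of `π` form a stratification: the decomposition is locally
finite, each fiber is locally closed, and the frontier condition holds. -/
theorem statement1 {X I : Type*} [tX : TopologicalSpace X] [PartialOrder I]
    (π : X → I) (hsurj : Function.Surjective π)
    (hcont : Continuous[tX, alexandrovTopOfRel (fun i j : I => i ≤ j)] π)
    (hlocfin : ∀ i : I, ∃ U : Set I,
      IsOpen[alexandrovTopOfRel (fun i j : I => i ≤ j)] U ∧ i ∈ U ∧ U.Finite)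
    (hopen : @IsOpenMap X I tX (alexandrovTopOfRel (fun i j : I => i ≤ j)) π) :
    (∀ x : X, ∃ U : Set X, IsOpen U ∧ x ∈ U ∧
      {i : I | (U ∩ π ⁻¹' {i}).Nonempty}.Finite) ∧
    (∀ i : I, IsLocallyClosed (π ⁻¹' {i})) ∧
    (∀ i j : I, (π ⁻¹' {i} ∩ closure (π ⁻¹' {j})).Nonempty →
      π ⁻¹' {i} ⊆ closure (π ⁻¹' {j})) := by
  letI : TopologicalSpace I := alexandrovTopOfRel (fun i j : I => i ≤ j)
  -- preimages of upper sets are open, of lower sets closed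
  have hUp : ∀ i : I, IsOpen (π ⁻¹' {k | i ≤ k}) := by
    intro i
    apply hcont.isOpen_preimage
    exact fun a b hab ha => le_trans ha hab
  have hLow : ∀ i : I, IsClosed (π ⁻¹' {k | k ≤ i}) := by
    intro i
    rw [← isOpen_compl_iff]
    have : (π ⁻¹' {k | k ≤ i})ᶜ = π ⁻¹' {k | ¬ k ≤ i} := rfl
    rw [this]
    apply hcont.isOpen_preimage
    exact fun a b hab ha hb => ha (le_trans hab hb)
  -- key: closure of fiber j contains every x with π x ≤ j
  have hclos : ∀ j : I, ∀ x : X, π x ≤ j → x ∈ closure (π ⁻¹' {j}) := by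
    intro j x hx
    rw [mem_closure_iff]
    intro V hV hxV
    have : j ∈ π '' V := hopen V hV hx ⟨x, hxV, rfl⟩
    obtain ⟨y, hyV, hyj⟩ := this
    exact ⟨y, hyV, hyj⟩
  refine ⟨?_, ?_, ?_⟩
  · intro x
    obtain ⟨U, hUopen, hxU, hUfin⟩ := hlocfin (π x)
    refine ⟨π ⁻¹' U, hcont.isOpen_preimage U hUopen, hxU, hUfin.subset ?_⟩
    rintro k ⟨y, hyU, hyk⟩
    simp only [mem_preimage, mem_singleton_iff] at hyU hyk
    exact hyk ▸ hyU
  · intro i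
    refine ⟨π ⁻¹' {k | i ≤ k}, π ⁻¹' {k | k ≤ i}, hUp i, hLow i, ?_⟩
    ext x
    simp only [mem_preimage, mem_singleton_iff, mem_inter_iff, mem_setOf_eq]
    constructor
    · rintro rfl; exact ⟨le_refl _, le_refl _⟩
    · rintro ⟨h1, h2⟩; exact le_antisymm h2 h1
  · rintro i j ⟨x, hxi, hxcl⟩ y hyi
    simp only [mem_preimage, mem_singleton_iff] at hxi hyi
    have hcl : closure (π ⁻¹' {j}) ⊆ π ⁻¹' {k | k ≤ j} := by
      apply closure_minimal _ (hLow j)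
      rintro z hz
      simp only [mem_preimage, mem_singleton_iff] at hz
      exact hz.le
    have hij : i ≤ j := by
      have := hcl hxcl
      rwa [mem_preimage, hxi] at this
    exact hclos j y (hyi.le.trans hij)
end

section
/- Let π : X → I be a surjective map from a topological space X, and let ≤ be the decomposition preorder on I (the specialization preorder of the quotient topology coinduced by π: i ≤ j iff i lies in the closure of {j} in the quotient topology). Suppose π : X → I_≤ is continuous when I carries the Alexandrov (upper-set) topology of ≤, and suppose ≤ is a partial order. Then the decomposition {π⁻¹(i) | i ∈ I} is a stratification (locally finite, with locally closed strata, satisfying the frontier condition) if and only if the Alexandrov space I_≤ is a locally finite topological space and the map π : X → I_≤ is open. -/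
open Set Topology TopologicalSpace

/-- Suppose `π : X → I` is a surjection, `le` is the decomposition preorder
(the specialization preorder of the quotient topology), `π` is continuous to the Alexandrov
topology of `le`, and `le` is a partial order. Then the fibers form a stratification iff the
Alexandrov space `I_≤` is locally finite and `π : X → I_≤` is an open map. -/
theorem statement2 {X I : Type*} [tX : TopologicalSpace X] (π : X → I)
    (hsurj : Function.Surjective π)
    (le : I → I → Prop)
    (hle : ∀ i j : I, le i j ↔ i ∈ @closure I (TopologicalSpace.coinduced π tX) {j})
    (hcont : Continuous[tX, alexandrovTopOfRel le] π)
    (hpo : IsPartialOrder I le) :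
    ((∀ x : X, ∃ U : Set X, IsOpen U ∧ x ∈ U ∧
        {i : I | (U ∩ π ⁻¹' {i}).Nonempty}.Finite) ∧
     (∀ i : I, IsLocallyClosed (π ⁻¹' {i})) ∧
     (∀ i j : I, (π ⁻¹' {i} ∩ closure (π ⁻¹' {j})).Nonempty →
        π ⁻¹' {i} ⊆ closure (π ⁻¹' {j})))
    ↔
    ((∀ i : I, ∃ U : Set I, IsOpen[alexandrovTopOfRel le] U ∧ i ∈ U ∧ U.Finite) ∧
     @IsOpenMap X I tX (alexandrovTopOfRel le) π) := by
  have hrefl : ∀ i, le i i := hpo.refl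
  have htrans : ∀ {i j k}, le i j → le j k → le i k :=
    fun h1 h2 => hpo.trans _ _ _ h1 h2
  -- preimages of upper sets are open
  have hupopen : ∀ U : Set I, (∀ ⦃i j : I⦄, le i j → i ∈ U → j ∈ U) →
      IsOpen (π ⁻¹' U) := fun U hU =>
    @Continuous.isOpen_preimage X I tX (alexandrovTopOfRel le) π hcont U hU
  -- reformulation of `le` via saturated open sets
  have hle' : ∀ i j : I, le i j ↔ ∀ U : Set I, IsOpen (π ⁻¹' U) → i ∈ U → j ∈ U := by
    intro i j
    letI tI : TopologicalSpace I := TopologicalSpace.coinduced π tX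
    rw [hle, mem_closure_iff]
    constructor
    · intro h U hU hiU
      have hne := h U ((isOpen_coinduced (f := π)).mpr hU) hiU
      obtain ⟨k, hkU, hk⟩ := hne
      rwa [mem_singleton_iff.mp hk] at hkU
    · intro h U hU hiU
      exact ⟨j, h U ((isOpen_coinduced (f := π)).mp hU) hiU, rfl⟩
  -- the saturated down-set is closed
  have hDclosed : ∀ j : I, IsClosed (π ⁻¹' {i | le i j}) := by
    intro j
    rw [← isOpen_compl_iff]
    have : (π ⁻¹' {i | le i j})ᶜ = π ⁻¹' {i | ¬ le i j} := by
      ext x; simp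
    rw [this]
    exact hupopen _ (fun a b hab ha hb => ha (htrans hab hb))
  have hsubD : ∀ j : I, closure (π ⁻¹' {j}) ⊆ π ⁻¹' {i | le i j} := by
    intro j
    apply closure_minimal _ (hDclosed j)
    intro x hx
    simp only [mem_preimage, mem_singleton_iff] at hx
    simp [hx, hrefl j]
  -- from the frontier condition: le (π x) j implies x ∈ closure of fiber of j
  have fact7 : (∀ i j : I, (π ⁻¹' {i} ∩ closure (π ⁻¹' {j})).Nonempty →
        π ⁻¹' {i} ⊆ closure (π ⁻¹' {j})) →
      ∀ (j : I) (x : X), le (π x) j → x ∈ closure (π ⁻¹' {j}) := by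
    intro hfr j x hxj
    set C := closure (π ⁻¹' {j}) with hC
    set S := {k : I | (π ⁻¹' {k} ∩ C).Nonempty} with hS
    have hpre : π ⁻¹' Sᶜ = Cᶜ := by
      ext y
      simp only [mem_preimage, mem_compl_iff, hS, mem_setOf_eq]
      constructor
      · intro hy hyC
        exact hy ⟨y, rfl, hyC⟩
      · intro hyC hne
        exact hyC (hfr (π y) j hne rfl)
    have hopenpre : IsOpen (π ⁻¹' Sᶜ) := by
      rw [hpre]; exact isClosed_closure.isOpen_compl
    have hjS : j ∈ S := by
      obtain ⟨y, hy⟩ := hsurj j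
      exact ⟨y, hy, subset_closure (show y ∈ π ⁻¹' {j} by simp [hy])⟩
    have hxS : π x ∈ S := by
      by_contra hxS
      exact ((hle' (π x) j).mp hxj Sᶜ hopenpre hxS) hjS
    exact hfr (π x) j hxS rfl
  -- from openness: le (π x) j implies x ∈ closure of fiber of j
  have fact8 : (@IsOpenMap X I tX (alexandrovTopOfRel le) π) →
      ∀ (j : I) (x : X), le (π x) j → x ∈ closure (π ⁻¹' {j}) := by
    intro hopen j x hxj
    rw [mem_closure_iff]
    intro U hU hxU
    have hPU : ∀ ⦃a b : I⦄, le a b → a ∈ π '' U → b ∈ π '' U := hopen U hU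
    have hj : j ∈ π '' U := hPU hxj ⟨x, hxU, rfl⟩
    obtain ⟨y, hyU, hy⟩ := hj
    exact ⟨y, hyU, by simp [hy]⟩
  constructor
  · rintro ⟨hlf, _, hfr⟩
    constructor
    · -- local finiteness of I
      intro i
      obtain ⟨x, hx⟩ := hsurj i
      obtain ⟨U, hU, hxU, hFin⟩ := hlf x
      refine ⟨{j | le i j}, fun a b hab ha => htrans ha hab, hrefl i, ?_⟩
      apply hFin.subset
      intro j hj
      have hxC : x ∈ closure (π ⁻¹' {j}) := fact7 hfr j x (by rw [hx]; exact hj)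
      obtain ⟨y, hyU, hyj⟩ := mem_closure_iff.mp hxC U hU hxU
      exact ⟨y, hyU, hyj⟩
    · -- openness
      intro V hV
      intro a b hab ha
      obtain ⟨x, hxV, hx⟩ := ha
      have hxC : x ∈ closure (π ⁻¹' {b}) := fact7 hfr b x (by rw [hx]; exact hab)
      obtain ⟨y, hyV, hyb⟩ := mem_closure_iff.mp hxC V hV hxV
      exact ⟨y, hyV, hyb⟩
  · rintro ⟨hlfI, hopen⟩
    refine ⟨?_, ?_, ?_⟩
    · -- local finiteness of the decomposition
      intro x
      obtain ⟨W, hW, hxW, hWfin⟩ := hlfI (π x)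
      refine ⟨π ⁻¹' W, hupopen W hW, hxW, hWfin.subset ?_⟩
      rintro i ⟨y, hyW, hyi⟩
      have hpy : π y = i := hyi
      rw [← hpy]
      exact hyW
    · -- locally closed strata
      intro i
      have heq : π ⁻¹' {i} = π ⁻¹' {j | le i j} ∩ π ⁻¹' {j | le j i} := by
        ext x
        simp only [mem_preimage, mem_singleton_iff, mem_inter_iff, mem_setOf_eq]
        constructor
        · rintro rfl; exact ⟨hrefl _, hrefl _⟩
        · rintro ⟨h1, h2⟩; exact (hpo.antisymm _ _ h2 h1)
      rw [heq]
      exact ((hupopen _ (fun a b hab ha => htrans ha hab)).isLocallyClosed).inter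
        (hDclosed i).isLocallyClosed
    · -- frontier condition
      intro i j hne
      obtain ⟨x, hxi, hxC⟩ := hne
      have hij : le i j := by
        have h1 : le (π x) j := hsubD j hxC
        rwa [show π x = i from hxi] at h1
      intro y hy
      exact fact8 hopen j y (by rw [show π y = i from hy]; exact hij)
end

section
/- Let π : X → I be a surjective map from a topological space X such that the quotient topology coinduced by π on I is Alexandrov (arbitrary intersections of open sets are open). Then the following are equivalent: (1) the decomposition satisfies the frontier condition; (2) for every j ∈ I, closure(π⁻¹(j)) = π⁻¹(D_j), where D_j is the closure of {j} in the quotient topology (so π⁻¹(D_j) is the minimal closed union of fibers containing π⁻¹(j)); (3) the decomposition preorder satisfies i ≤ j ⟺ π⁻¹(i) ⊆ closure(π⁻¹(j)); (4) the map π : X → I_π is an open map onto the quotient topology. -/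
open Set Topology TopologicalSpace

/-- For an Alexandrov decomposition `π : X → I`, the following are
equivalent: (1) the frontier condition; (2) the closure of each fiber is the preimage of the
closure of the corresponding point of the decomposition space; (3) the decomposition
preorder is `i ≤ j ↔ π⁻¹(i) ⊆ cl(π⁻¹(j))`; (4) `π` is an open map onto the quotient
topology. -/
theorem statement3 {X I : Type*} [tX : TopologicalSpace X] (π : X → I)
    (hsurj : Function.Surjective π)
    (halex : IsAlexandrovTopology (TopologicalSpace.coinduced π tX)) :
    List.TFAE [
      ∀ i j : I, (π ⁻¹' {i} ∩ closure (π ⁻¹' {j})).Nonempty →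
        π ⁻¹' {i} ⊆ closure (π ⁻¹' {j}),
      ∀ j : I, closure (π ⁻¹' {j}) =
        π ⁻¹' (@closure I (TopologicalSpace.coinduced π tX) {j}),
      ∀ i j : I, i ∈ @closure I (TopologicalSpace.coinduced π tX) {j} ↔
        π ⁻¹' {i} ⊆ closure (π ⁻¹' {j}),
      @IsOpenMap X I tX (TopologicalSpace.coinduced π tX) π ] := by
  letI tI : TopologicalSpace I := TopologicalSpace.coinduced π tX
  have hopen : ∀ s : Set I, IsOpen s ↔ IsOpen (π ⁻¹' s) := fun s => isOpen_coinduced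
  have hcont : Continuous π := continuous_coinduced_rng
  have hsubset : ∀ j : I, closure (π ⁻¹' {j}) ⊆ π ⁻¹' (closure {j}) := fun j =>
    closure_minimal (Set.preimage_mono subset_closure)
      (isClosed_closure.preimage hcont)
  have hback : ∀ i j : I, π ⁻¹' {i} ⊆ closure (π ⁻¹' {j}) →
      i ∈ closure ({j} : Set I) := by
    intro i j h
    obtain ⟨x, hx⟩ := hsurj i
    have hmem : x ∈ π ⁻¹' {i} := by simp [hx]
    have := hsubset j (h hmem)
    simpa [hx] using this
  tfae_have 1 → 3 := by
    intro h1 i j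
    refine ⟨fun hij => ?_, hback i j⟩
    set C := closure (π ⁻¹' {j}) with hC
    have hsat : π ⁻¹' (π '' C) = C := by
      apply Subset.antisymm
      · rintro x ⟨y, hy, hxy⟩
        exact h1 (π x) j ⟨y, by simp [hxy], hy⟩ rfl
      · exact subset_preimage_image π C
    have hclosed : IsClosed (π '' C) := by
      rw [← isOpen_compl_iff, hopen, Set.preimage_compl, hsat]
      exact isOpen_compl_iff.2 isClosed_closure
    have hjmem : ({j} : Set I) ⊆ π '' C := by
      obtain ⟨x, hx⟩ := hsurj j
      exact Set.singleton_subset_iff.2 ⟨x, subset_closure (by simp [hx]), hx⟩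
    obtain ⟨x', hx'C, hx'i⟩ := closure_minimal hjmem hclosed hij
    exact h1 i j ⟨x', by simp [hx'i], hx'C⟩
  tfae_have 3 → 2 := by
    intro h3 j
    refine Subset.antisymm (hsubset j) fun x hx => ?_
    exact (h3 (π x) j).1 hx rfl
  tfae_have 2 → 1 := by
    intro h2 i j hne
    obtain ⟨x0, hx0i, hx0c⟩ := hne
    rw [h2 j] at hx0c ⊢
    intro x hx
    have : π x = π x0 := by
      simp only [Set.mem_preimage, Set.mem_singleton_iff] at hx hx0i
      rw [hx, hx0i]
    exact Set.mem_preimage.2 (this ▸ hx0c)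
  tfae_have 3 → 4 := by
    intro h3 V hV
    have hUopen : ∀ i : I, IsOpen (⋂₀ {U : Set I | IsOpen U ∧ i ∈ U}) :=
      fun i => halex _ fun U hU => hU.1
    have hUchar : ∀ i j : I, j ∈ ⋂₀ {U : Set I | IsOpen U ∧ i ∈ U} ↔
        i ∈ closure ({j} : Set I) := by
      intro i j
      rw [mem_closure_iff]
      constructor
      · intro h o ho hio
        exact ⟨j, h o ⟨ho, hio⟩, rfl⟩
      · intro h U hU
        obtain ⟨y, hy, hyj⟩ := h U hU.1 hU.2
        exact Set.mem_singleton_iff.1 hyj ▸ hy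
    have key : π '' V = ⋃ i ∈ π '' V, ⋂₀ {U : Set I | IsOpen U ∧ i ∈ U} := by
      apply Subset.antisymm
      · intro i hi
        exact Set.mem_biUnion hi (fun U hU => hU.2)
      · rintro j hj
        simp only [Set.mem_iUnion] at hj
        obtain ⟨i, hi, hji⟩ := hj
        have hicl : i ∈ closure ({j} : Set I) := (hUchar i j).1 hji
        obtain ⟨x, hxV, hxi⟩ := hi
        have hxcl : x ∈ closure (π ⁻¹' {j}) := (h3 i j).1 hicl (by simp [hxi])
        obtain ⟨y, hyV, hyj⟩ := mem_closure_iff.1 hxcl V hV hxV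
        exact ⟨y, hyV, hyj⟩
      
    show IsOpen (π '' V)
    rw [key]
    exact isOpen_biUnion fun i _ => hUopen i
  tfae_have 4 → 3 := by
    intro h4 i j
    refine ⟨fun hij x hx => ?_, hback i j⟩
    rw [mem_closure_iff]
    intro W hW hxW
    have : j ∈ π '' W := by
      obtain ⟨y, hy, hyj⟩ := mem_closure_iff.1 hij (π '' W) (h4 W hW)
        ⟨x, hxW, hx⟩
      exact Set.mem_singleton_iff.1 hyj ▸ hy
    obtain ⟨y, hyW, hyj⟩ := this
    exact ⟨y, hyW, hyj⟩
  tfae_finish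
end

section
/- Let π : X → I be a surjective map from a topological space X such that the quotient topology coinduced by π on I is Alexandrov. Then the following are equivalent: (1) every fiber π⁻¹(i) is locally closed in X and the frontier condition holds; (2) there exists a partial order ≼ on I such that π : X → I_≼ is continuous for the Alexandrov (upper-set) topology of ≼, and π : X → I_π is an open map onto the quotient topology. Moreover, when these hold, the decomposition preorder ≤ is a partial order and π : X → I_≤ is continuous for the Alexandrov topology of ≤. -/
open Set Topology TopologicalSpace

section Aux

variable {X I : Type*}

lemma memClosureSingleton [tI : TopologicalSpace I] {i j : I} :
    i ∈ closure ({j} : Set I) ↔ ∀ U : Set I, IsOpen U → i ∈ U → j ∈ U := by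
  simp only [mem_closure_iff, Set.inter_singleton_nonempty]

lemma isOpen_of_upper [tI : TopologicalSpace I] (halex : IsAlexandrovTopology tI)
    {S : Set I} (hS : ∀ ⦃i j : I⦄, i ∈ closure ({j} : Set I) → i ∈ S → j ∈ S) :
    IsOpen S := by
  have hmin : ∀ j : I, IsOpen (⋂₀ {U : Set I | IsOpen U ∧ j ∈ U}) :=
    fun j => halex _ (fun U hU => hU.1)
  have hEq : S = ⋃ j ∈ S, ⋂₀ {U : Set I | IsOpen U ∧ j ∈ U} := by
    ext i
    constructor
    · intro hi; exact mem_biUnion hi (fun U hU => hU.2)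
    · intro hi
      obtain ⟨j, hj, hij⟩ := mem_iUnion₂.mp hi
      have : j ∈ closure ({i} : Set I) :=
        memClosureSingleton.mpr (fun U hU hjU => hij U ⟨hU, hjU⟩)
      exact hS this hj
  rw [hEq]
  exact isOpen_biUnion (fun j _ => hmin j)

variable [tX : TopologicalSpace X] [tI : TopologicalSpace I] {π : X → I}

lemma spec_iff (hsurj : Function.Surjective π)
    (hopen : ∀ U : Set I, IsOpen U ↔ IsOpen (π ⁻¹' U))
    (hf : ∀ i j : I, (π ⁻¹' {i} ∩ closure (π ⁻¹' {j})).Nonempty →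
        π ⁻¹' {i} ⊆ closure (π ⁻¹' {j})) {i j : I} :
    i ∈ closure ({j} : Set I) ↔ π ⁻¹' {i} ⊆ closure (π ⁻¹' {j}) := by
  constructor
  · intro hij
    set S : Set I := {k | (π ⁻¹' {k} ∩ closure (π ⁻¹' {j})).Nonempty} with hSdef
    have hpre : π ⁻¹' Sᶜ = (closure (π ⁻¹' {j}))ᶜ := by
      ext x
      simp only [mem_preimage, mem_compl_iff, hSdef, mem_setOf_eq]
      constructor
      · intro h hx
        exact h ⟨x, rfl, hx⟩
      · intro h hne
        exact h (hf _ j hne rfl)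
    have hScl : IsClosed S := by
      rw [← isOpen_compl_iff, hopen Sᶜ, hpre]
      exact isClosed_closure.isOpen_compl
    have hjS : j ∈ S := by
      obtain ⟨x, hx⟩ := hsurj j
      exact ⟨x, hx, subset_closure hx⟩
    have : closure ({j} : Set I) ⊆ S :=
      closure_minimal (singleton_subset_iff.mpr hjS) hScl
    exact hf i j (this hij)
  · intro h
    refine memClosureSingleton.mpr (fun U hU hiU => ?_)
    obtain ⟨x, hx⟩ := hsurj i
    have hxU : x ∈ π ⁻¹' U := by simpa [hx] using hiU
    have hxcl : x ∈ closure (π ⁻¹' {j}) := h hx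
    obtain ⟨z, hzU, hzj⟩ := mem_closure_iff.mp hxcl _ ((hopen U).mp hU) hxU
    have : π z ∈ U := hzU
    rwa [hzj] at this

omit tI in
lemma antisym_aux (hsurj : Function.Surjective π)
    (hlc : ∀ i : I, IsLocallyClosed (π ⁻¹' {i})) {i j : I}
    (hij : π ⁻¹' {i} ⊆ closure (π ⁻¹' {j}))
    (hji : π ⁻¹' {j} ⊆ closure (π ⁻¹' {i})) : i = j := by
  by_contra hne
  obtain ⟨U, Z, hU, hZ, hUZ⟩ := hlc i
  obtain ⟨x, hx⟩ := hsurj i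
  have hxmem : x ∈ π ⁻¹' {i} := hx
  have hxU : x ∈ U := (hUZ ▸ hxmem).1
  have hclZ : closure (π ⁻¹' {i}) ⊆ Z :=
    closure_minimal (by rw [hUZ]; exact inter_subset_right) hZ
  obtain ⟨y, hyU, hyj⟩ := mem_closure_iff.mp (hij hxmem) U hU hxU
  have hyi : y ∈ π ⁻¹' {i} := by rw [hUZ]; exact ⟨hyU, hclZ (hji hyj)⟩
  exact hne ((show π y = i from hyi).symm.trans hyj)

end Aux

/-- For an Alexandrov decomposition `π : X → I`: the strata are all locally
closed and the frontier condition holds iff there is a partial order on `I` for which `π` is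
poset-stratified and `π` is open onto the quotient topology. Moreover, in that case the
decomposition preorder is a partial order and `π` is continuous to its Alexandrov topology. -/
theorem statement4 {X I : Type*} [tX : TopologicalSpace X] (π : X → I)
    (hsurj : Function.Surjective π)
    (halex : IsAlexandrovTopology (TopologicalSpace.coinduced π tX)) :
    (((∀ i : I, IsLocallyClosed (π ⁻¹' {i})) ∧
      (∀ i j : I, (π ⁻¹' {i} ∩ closure (π ⁻¹' {j})).Nonempty →
        π ⁻¹' {i} ⊆ closure (π ⁻¹' {j})))
     ↔
     ((∃ r : I → I → Prop, IsPartialOrder I r ∧ Continuous[tX, alexandrovTopOfRel r] π) ∧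
      @IsOpenMap X I tX (TopologicalSpace.coinduced π tX) π)) ∧
    (((∀ i : I, IsLocallyClosed (π ⁻¹' {i})) ∧
      (∀ i j : I, (π ⁻¹' {i} ∩ closure (π ⁻¹' {j})).Nonempty →
        π ⁻¹' {i} ⊆ closure (π ⁻¹' {j}))) →
      (IsPartialOrder I (fun i j : I => i ∈ @closure I (TopologicalSpace.coinduced π tX) {j}) ∧
       Continuous[tX, alexandrovTopOfRel
         (fun i j : I => i ∈ @closure I (TopologicalSpace.coinduced π tX) {j})] π)) := by
  letI tI : TopologicalSpace I := TopologicalSpace.coinduced π tX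
  have hopen : ∀ U : Set I, IsOpen U ↔ IsOpen (π ⁻¹' U) := fun U => isOpen_coinduced
  -- the "forward" data, from (1)
  have hpo : ∀ (_ : ∀ i : I, IsLocallyClosed (π ⁻¹' {i}))
      (_ : ∀ i j : I, (π ⁻¹' {i} ∩ closure (π ⁻¹' {j})).Nonempty →
        π ⁻¹' {i} ⊆ closure (π ⁻¹' {j})),
      IsPartialOrder I (fun i j : I => i ∈ closure ({j} : Set I)) := by
    intro hlc hf
    refine { refl := fun i => subset_closure rfl,
             trans := fun i j k hij hjk =>
               closure_minimal (singleton_subset_iff.mpr hjk) isClosed_closure hij,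
             antisymm := fun i j hij hji =>
               antisym_aux hsurj hlc ((spec_iff hsurj hopen hf).mp hij)
                 ((spec_iff hsurj hopen hf).mp hji) }
  have hcont : Continuous[tX, alexandrovTopOfRel (fun i j : I => i ∈ closure ({j} : Set I))] π := by
    refine continuous_def.mpr (fun U hU => ?_)
    exact (hopen U).mp (isOpen_of_upper halex hU)
  constructor
  · constructor
    · rintro ⟨hlc, hf⟩
      refine ⟨⟨fun i j => i ∈ closure ({j} : Set I), hpo hlc hf, hcont⟩, ?_⟩
      intro V hV
      refine isOpen_of_upper halex (fun i j hij hi => ?_)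
      obtain ⟨v, hvV, hvπ⟩ := hi
      have hv : v ∈ closure (π ⁻¹' {j}) := (spec_iff hsurj hopen hf).mp hij hvπ
      obtain ⟨w, hwV, hwj⟩ := mem_closure_iff.mp hv V hV hvV
      exact ⟨w, hwV, hwj⟩
    · rintro ⟨⟨r, hr, hrc⟩, hmap⟩
      have hfr : ∀ i j : I, (π ⁻¹' {i} ∩ closure (π ⁻¹' {j})).Nonempty →
          π ⁻¹' {i} ⊆ closure (π ⁻¹' {j}) := by
        rintro i j ⟨x, hxi, hxcl⟩ y hyi
        refine mem_closure_iff.mpr (fun V hV hyV => ?_)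
        have hA : IsOpen (π ⁻¹' (π '' V)) := (hopen _).mp (hmap V hV)
        have hxA : x ∈ π ⁻¹' (π '' V) :=
          ⟨y, hyV, (show π y = i from hyi).trans (show π x = i from hxi).symm⟩
        obtain ⟨z, hzA, hzj⟩ := mem_closure_iff.mp hxcl _ hA hxA
        obtain ⟨w, hwV, hw⟩ := hzA
        exact ⟨w, hwV, hw.trans hzj⟩
      refine ⟨fun i => ?_, hfr⟩
      have hAopen : IsOpen (π ⁻¹' {j | r i j}) := by
        refine continuous_def.mp hrc _ (fun a b hab ha => ?_)
        exact hr.toIsPreorder.toIsTrans.trans _ _ _ ha hab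
      refine ⟨π ⁻¹' {j | r i j}, closure (π ⁻¹' {i}), hAopen, isClosed_closure, ?_⟩
      ext x
      constructor
      · intro hx
        have hxi : π x = i := hx
        exact ⟨by simp [mem_preimage, hxi]; exact hr.toIsPreorder.toRefl.refl i,
          subset_closure hx⟩
      · rintro ⟨hxA, hxcl⟩
        have hDopen : IsOpen (π ⁻¹' {k | r (π x) k}) := by
          refine continuous_def.mp hrc _ (fun a b hab ha => ?_)
          exact hr.toIsPreorder.toIsTrans.trans _ _ _ ha hab
        have hxD : x ∈ π ⁻¹' {k | r (π x) k} := hr.toIsPreorder.toRefl.refl _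
        obtain ⟨z, hzD, hzi⟩ := mem_closure_iff.mp hxcl _ hDopen hxD
        have hzi' : π z = i := hzi
        have : r (π x) i := hzi' ▸ hzD
        exact (hr.toAntisymm.antisymm _ _ hxA this).symm
  · rintro ⟨hlc, hf⟩
    exact ⟨hpo hlc hf, hcont⟩
end

section
/- Let π : X → I be a surjective map from a topological space X such that the quotient topology coinduced by π on I is Alexandrov. Then the following are equivalent: (1) there exists a partial order ≼ on I such that π : X → I_≼ is continuous for the Alexandrov (upper-set) topology of ≼; (2) the decomposition preorder ≤ on I is a partial order and π : X → I_≤ is continuous for its Alexandrov topology; (3) for every i ∈ I, the fiber π⁻¹(i) is open in π⁻¹(D_i), where D_i is the closure of {i} in the quotient topology (in particular each fiber is locally closed in X). -/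
open Set Topology TopologicalSpace

/-- For an Alexandrov decomposition `π : X → I`, the following are
equivalent: (1) `π` is poset-stratified with respect to some partial order on `I`;
(2) the decomposition preorder is a partial order and `π` is poset-stratified with respect
to it; (3) each fiber `π⁻¹(i)` is open in `π⁻¹(Dᵢ)`, where `Dᵢ` is the closure of `{i}` in
the quotient topology. -/
theorem statement5 {X I : Type*} [tX : TopologicalSpace X] (π : X → I)
    (hsurj : Function.Surjective π)
    (halex : IsAlexandrovTopology (TopologicalSpace.coinduced π tX)) :
    List.TFAE [
      ∃ r : I → I → Prop, IsPartialOrder I r ∧ Continuous[tX, alexandrovTopOfRel r] π,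
      IsPartialOrder I (fun i j : I => i ∈ @closure I (TopologicalSpace.coinduced π tX) {j}) ∧
        Continuous[tX, alexandrovTopOfRel
          (fun i j : I => i ∈ @closure I (TopologicalSpace.coinduced π tX) {j})] π,
      ∀ i : I, ∃ U : Set X, IsOpen U ∧
        π ⁻¹' {i} = U ∩ π ⁻¹' (@closure I (TopologicalSpace.coinduced π tX) {i}) ] := by
  classical
  set t : TopologicalSpace I := TopologicalSpace.coinduced π tX with ht
  have hrefl : ∀ i : I, i ∈ @closure I t {i} := by
    letI := t; exact fun i => subset_closure rfl
  have htrans : ∀ {i j k : I}, i ∈ @closure I t {j} → j ∈ @closure I t {k} →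
      i ∈ @closure I t {k} := by
    letI := t
    intro i j k hij hjk
    have h1 : ({j} : Set I) ⊆ closure {k} := by
      intro a ha; cases ha; exact hjk
    have h2 := closure_mono h1
    have h3 : closure (closure ({k} : Set I)) = closure {k} := closure_closure
    exact h3 ▸ h2 hij
  have hmemM : ∀ i j : I, i ∈ @closure I t {j} ↔ ∀ V : Set I, t.IsOpen V → i ∈ V → j ∈ V := by
    letI := t
    intro i j
    rw [mem_closure_iff]
    constructor
    · intro h V hV hiV
      obtain ⟨a, haV, ha⟩ := h V hV hiV
      cases ha; exact haV
    · intro h V hV hiV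
      exact ⟨j, h V hV hiV, rfl⟩
  have hMopen : ∀ i : I, t.IsOpen {k | i ∈ @closure I t {k}} := by
    intro i
    have heq : {k | i ∈ @closure I t {k}} = ⋂₀ {V : Set I | t.IsOpen V ∧ i ∈ V} := by
      ext k
      simp only [mem_setOf_eq, mem_sInter, hmemM i k]
      constructor
      · rintro h V ⟨hV, hiV⟩; exact h V hV hiV
      · intro h V hV hiV; exact h V ⟨hV, hiV⟩
    rw [heq]
    exact halex _ (fun U hU => hU.1)
  have hMpre : ∀ i : I, IsOpen (π ⁻¹' {k | i ∈ @closure I t {k}}) := fun i =>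
    isOpen_coinduced.mp (hMopen i)
  have hcont0 : Continuous[tX, alexandrovTopOfRel
      (fun i j : I => i ∈ @closure I t {j})] π := by
    refine (@continuous_def X I tX (alexandrovTopOfRel _) π).mpr ?_
    intro V hV
    have hV' : ∀ ⦃i j : I⦄, i ∈ @closure I t {j} → i ∈ V → j ∈ V := hV
    have heq : π ⁻¹' V = ⋃ i ∈ V, π ⁻¹' {k | i ∈ @closure I t {k}} := by
      ext x
      simp only [mem_preimage, mem_iUnion, mem_setOf_eq]
      constructor
      · intro hx; exact ⟨π x, hx, hrefl (π x)⟩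
      · rintro ⟨i, hiV, hix⟩; exact hV' hix hiV
    rw [heq]
    exact isOpen_biUnion fun i _ => hMpre i
  tfae_have 1 → 2 := by
    rintro ⟨r, hr, hcont⟩
    refine ⟨?_, hcont0⟩
    haveI := hr
    have key : ∀ i j : I, i ∈ @closure I t {j} → r i j := by
      intro i j hij
      have hV : (alexandrovTopOfRel r).IsOpen {k | r i k} :=
        fun a b hab ha => _root_.trans ha hab
      have hpre : IsOpen (π ⁻¹' {k | r i k}) :=
        @Continuous.isOpen_preimage X I tX (alexandrovTopOfRel r) π hcont _ hV
      have hto : t.IsOpen {k | r i k} := isOpen_coinduced.mpr hpre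
      exact (hmemM i j).mp hij _ hto (refl_of r i)
    exact { refl := hrefl, trans := fun a b c hab hbc => htrans hab hbc,
            antisymm := fun a b h1 h2 => antisymm (key a b h1) (key b a h2) }
  tfae_have 2 → 3 := by
    rintro ⟨hpo, -⟩ i
    refine ⟨π ⁻¹' {k | i ∈ @closure I t {k}}, hMpre i, ?_⟩
    ext x
    simp only [mem_preimage, mem_inter_iff, mem_setOf_eq, mem_singleton_iff]
    constructor
    · intro hx; rw [hx]; exact ⟨hrefl i, hrefl i⟩
    · rintro ⟨h1, h2⟩
      exact hpo.antisymm _ _ h2 h1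
  tfae_have 3 → 2 := by
    intro h3
    choose U hUopen hUeq using h3
    refine ⟨?_, hcont0⟩
    refine { refl := hrefl, trans := fun a b c hab hbc => htrans hab hbc, antisymm := ?_ }
    intro i j hij hji
    by_contra hne
    have hkey : π ⁻¹' {k | i ∈ @closure I t {k} ∧ k ≠ i}
        = (π ⁻¹' {k | i ∈ @closure I t {k}}) ∩
          ⋃ k ∈ {k | i ∈ @closure I t {k} ∧ k ≠ i}, U k := by
      ext x
      simp only [mem_preimage, mem_inter_iff, mem_iUnion, mem_setOf_eq]
      constructor
      · rintro ⟨hx1, hx2⟩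
        refine ⟨hx1, π x, ⟨hx1, hx2⟩, ?_⟩
        have hx : x ∈ π ⁻¹' {π x} := rfl
        rw [hUeq (π x)] at hx
        exact hx.1
      · rintro ⟨hx1, k, ⟨hk1, hk2⟩, hxk⟩
        refine ⟨hx1, ?_⟩
        intro hxe
        have hx : x ∈ U k ∩ π ⁻¹' (@closure I t {k}) := ⟨hxk, by
          show π x ∈ @closure I t {k}; rw [hxe]; exact hk1⟩
        rw [← hUeq k] at hx
        have hpk : π x = k := hx
        exact hk2 (by rw [← hpk, hxe])
    have hopenM' : t.IsOpen {k | i ∈ @closure I t {k} ∧ k ≠ i} := by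
      refine isOpen_coinduced.mpr ?_
      rw [hkey]
      exact (hMpre i).inter (isOpen_biUnion fun k _ => hUopen k)
    have hjM : j ∈ {k | i ∈ @closure I t {k} ∧ k ≠ i} :=
      ⟨hij, fun h => hne h.symm⟩
    have hiM := (hmemM j i).mp hji _ hopenM' hjM
    exact hiM.2 rfl
  tfae_have 2 → 1 := fun h => ⟨_, h.1, h.2⟩
  tfae_finish
end

section
/- Let π : X → I be a surjective map from a topological space X, and suppose X carries the final topology with respect to a family of maps f_j : Y_j → X (j ∈ J), i.e. a set U ⊆ X is open iff f_j⁻¹(U) is open in Y_j for every j. If for each j ∈ J the set {i ∈ I | f_j⁻¹(π⁻¹(i)) ≠ ∅} is finite, then the quotient topology coinduced by π on I is Alexandrov (arbitrary intersections of open sets are open). -/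
open Set Topology TopologicalSpace

/-- If `X` carries the final topology with respect to a family of maps
`f j : Y j → X` each of which meets only finitely many fibers of a surjection `π : X → I`,
then the quotient topology coinduced by `π` on `I` is Alexandrov. -/
theorem statement8 {X I J : Type*} {Y : J → Type*} [tX : TopologicalSpace X]
    [tY : ∀ j, TopologicalSpace (Y j)] (f : ∀ j, Y j → X) (π : X → I)
    (hsurj : Function.Surjective π)
    (hfinal : ∀ U : Set X, IsOpen U ↔ ∀ j : J, IsOpen ((f j) ⁻¹' U))
    (hfin : ∀ j : J, {i : I | ((f j) ⁻¹' (π ⁻¹' {i})).Nonempty}.Finite) :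
    IsAlexandrovTopology (TopologicalSpace.coinduced π tX) := by
  intro S hS
  change IsOpen (π ⁻¹' ⋂₀ S)
  rw [hfinal]
  intro j
  set g : Y j → I := π ∘ f j with hg
  set F : Set I := {i : I | ((f j) ⁻¹' (π ⁻¹' {i})).Nonempty} with hF
  have key : ∀ U : Set I, g ⁻¹' U = g ⁻¹' (U ∩ F) := by
    intro U
    ext y
    simp only [mem_preimage, mem_inter_iff]
    refine ⟨fun h => ⟨h, ⟨y, rfl⟩⟩, fun h => h.1⟩
  have hcast : (f j ⁻¹' (π ⁻¹' ⋂₀ S)) = ⋂₀ ((fun U : Set I => g ⁻¹' U) '' S) := by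
    rw [sInter_image]
    ext y
    simp [g]
  rw [hcast]
  have hTfin : ((fun U : Set I => g ⁻¹' U) '' S).Finite := by
    have : (fun U : Set I => g ⁻¹' U) '' S
        = (fun V : Set I => g ⁻¹' V) '' ((fun U : Set I => U ∩ F) '' S) := by
      rw [image_image]
      exact image_congr fun U _ => key U
    rw [this]
    apply Set.Finite.image
    refine ((hfin j).finite_subsets).subset ?_
    rintro _ ⟨U, _, rfl⟩
    exact inter_subset_right
  refine Set.Finite.isOpen_sInter hTfin ?_
  rintro _ ⟨U, hU, rfl⟩
  have := hS U hU
  change IsOpen (π ⁻¹' U) at this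
  rw [hfinal] at this
  exact this j
end

section
/- Let π : X → I be a surjective map from a topological space X whose decomposition is locally finite, i.e. every point of X has an open neighborhood U such that {i ∈ I | U ∩ π⁻¹(i) ≠ ∅} is finite. Then the quotient topology coinduced by π on I is Alexandrov (arbitrary intersections of open sets are open). -/
open Set Topology TopologicalSpace

/-- Any locally finite decomposition is Alexandrov: if every point of `X`
has an open neighborhood meeting only finitely many fibers of the surjection `π : X → I`,
then the quotient topology coinduced by `π` on `I` is Alexandrov. -/
theorem statement9 {X I : Type*} [tX : TopologicalSpace X] (π : X → I)
    (hsurj : Function.Surjective π)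
    (hlf : ∀ x : X, ∃ U : Set X, IsOpen U ∧ x ∈ U ∧
      {i : I | (U ∩ π ⁻¹' {i}).Nonempty}.Finite) :
    IsAlexandrovTopology (TopologicalSpace.coinduced π tX) := by
  classical
  intro S hS
  show IsOpen[TopologicalSpace.coinduced π tX] (⋂₀ S)
  rw [isOpen_coinduced]
  rw [isOpen_iff_forall_mem_open]
  intro x hx
  obtain ⟨V, hVopen, hxV, hF⟩ := hlf x
  have hch : ∀ i : I, ∃ U : Set I, i ∉ ⋂₀ S → U ∈ S ∧ i ∉ U := by
    intro i
    by_cases hi : i ∈ ⋂₀ S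
    · exact ⟨∅, fun h => absurd hi h⟩
    · obtain ⟨U, hUS, hiU⟩ : ∃ U ∈ S, i ∉ U := by
        simpa [Set.mem_sInter, not_forall] using hi
      exact ⟨U, fun _ => ⟨hUS, hiU⟩⟩
  choose g hg using hch
  set T : Set I := {i : I | (V ∩ π ⁻¹' {i}).Nonempty} ∩ {i : I | i ∉ ⋂₀ S} with hTdef
  have hT : T.Finite := hF.inter_of_left _
  refine ⟨V ∩ ⋂ i ∈ T, π ⁻¹' (g i), ?_, ?_, hxV, ?_⟩
  · intro y hy
    have hyV : y ∈ V := hy.1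
    simp only [Set.mem_preimage, Set.mem_sInter]
    intro U hU
    by_cases hmem : π y ∈ ⋂₀ S
    · exact hmem U hU
    · have hyT : π y ∈ T := ⟨⟨y, hyV, rfl⟩, hmem⟩
      have := hy.2
      simp only [Set.mem_iInter] at this
      have hyg : π y ∈ g (π y) := this (π y) hyT
      exact absurd hyg ((hg (π y) hmem).2)
  · refine hVopen.inter (hT.isOpen_biInter fun i hi => ?_)
    have : IsOpen[TopologicalSpace.coinduced π tX] (g i) := hS _ (hg i hi.2).1
    exact isOpen_coinduced.mp this
  · simp only [Set.mem_iInter, Set.mem_preimage]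
    intro i hi
    exact hx (g i) (hg i hi.2).1
end

section
/- Let X be a compactly generated topological space (X carries the final topology with respect to the inclusions of its compact subspaces: a set U ⊆ X is open iff U ∩ K is open in K for every compact K ⊆ X). Let π : X → I be a surjective map such that every compact subspace of X meets only finitely many fibers of π, i.e. for each compact K ⊆ X the set {i ∈ I | K ∩ π⁻¹(i) ≠ ∅} is finite. Then the quotient topology coinduced by π on I is Alexandrov (arbitrary intersections of open sets are open). -/
open Set Topology TopologicalSpace

/-- If `X` is compactly generated (a set is open iff its intersection with
every compact subspace is open in that subspace) and every compact subspace meets only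
finitely many fibers of the surjection `π : X → I`, then the quotient topology on `I` is
Alexandrov. -/
theorem statement10 {X I : Type*} [tX : TopologicalSpace X] (π : X → I)
    (hsurj : Function.Surjective π)
    (hcg : ∀ U : Set X, IsOpen U ↔
      ∀ K : Set X, IsCompact K → IsOpen ((Subtype.val : K → X) ⁻¹' U))
    (hfin : ∀ K : Set X, IsCompact K → {i : I | (K ∩ π ⁻¹' {i}).Nonempty}.Finite) :
    IsAlexandrovTopology (TopologicalSpace.coinduced π tX) := by
  classical
  intro S hS
  show IsOpen (π ⁻¹' ⋂₀ S)
  rw [hcg]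
  intro K hK
  -- choice of a witness open set excluding each bad i
  have hchoice : ∀ i : I, i ∉ ⋂₀ S → ∃ U ∈ S, i ∉ U := by
    intro i hi
    by_contra h
    push_neg at h
    exact hi fun U hU => h U hU
  set V : I → Set I := fun i =>
    if h : i ∉ ⋂₀ S then (hchoice i h).choose else Set.univ with hV
  have hVmem : ∀ i, i ∉ ⋂₀ S → V i ∈ S ∧ i ∉ V i := by
    intro i hi
    simp only [hV, dif_pos hi]
    exact ⟨(hchoice i hi).choose_spec.1, (hchoice i hi).choose_spec.2⟩
  set G : Set I := {i | (K ∩ π ⁻¹' {i}).Nonempty ∧ i ∉ ⋂₀ S} with hG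
  have hGfin : G.Finite := (hfin K hK).subset fun i hi => hi.1
  have key : (Subtype.val : K → X) ⁻¹' (π ⁻¹' ⋂₀ S) =
      ⋂ i ∈ G, (Subtype.val : K → X) ⁻¹' (π ⁻¹' (V i)) := by
    ext x
    simp only [Set.mem_preimage, Set.mem_iInter, Set.mem_sInter]
    constructor
    · intro hx i hi
      exact hx _ (hVmem i hi.2).1
    · intro hx U hU
      by_cases h : π x.1 ∈ ⋂₀ S
      · exact h U hU
      · have hmem : π x.1 ∈ G := ⟨⟨x.1, x.2, rfl⟩, h⟩
        exact absurd (hx _ hmem) (hVmem _ h).2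
  rw [key]
  exact Set.Finite.isOpen_biInter hGfin fun i hi =>
    (hS (V i) (hVmem i hi.2).1).preimage continuous_subtype_val
end
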